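/- Let H be the group with presentation ⟨x_1, x_2, x_3, x_4 | x_1^2 = x_4, [x_2,x_1] = x_3, x_2^2 = x_3^2 = x_4^2 = 1, [x_3,x_1] = [x_3,x_2] = [x_4,x_1] = [x_4,x_2] = [x_4,x_3] = 1⟩. Then the lower 2-central series of H satisfies: P_1(H) = ⟨x_3, x_4⟩ has order 4, P_2(H) = {1}, and H/P_1(H) ≅ Z/2 × Z/2; in particular H has 2-class 2. -/

import Mathlib

open scoped commutatorElement

/-- For a subgroup `H ≤ G`, the subgroup `H^2[G,H]` generated by squares of
elements of `H` and commutators `⁅g,h⁆` with `g ∈ G`, `h ∈ H`. -/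
def pStep {G : Type*} [Group G] (H : Subgroup G) : Subgroup G :=
  Subgroup.closure ({y | ∃ h ∈ H, y = h ^ 2} ∪ {y | ∃ g : G, ∃ h ∈ H, y = ⁅g, h⁆})

/-- The lower 2-central series: `P_0(G) = G`, `P_n(G) = P_{n-1}(G)^2[G, P_{n-1}(G)]`. -/
def lowerP (G : Type*) [Group G] : ℕ → Subgroup G
  | 0 => ⊤
  | n + 1 => pStep (lowerP G n)

theorem pStep_normal {G : Type*} [Group G] (H : Subgroup G) [hH : H.Normal] :
    (pStep H).Normal := by
  constructor
  intro n hn g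
  have key : (pStep H).map ((MulAut.conj g).toMonoidHom) ≤ pStep H := by
    rw [pStep, MonoidHom.map_closure, Subgroup.closure_le]
    rintro _ ⟨y, hy, rfl⟩
    rcases hy with ⟨h, hh, rfl⟩ | ⟨a, h, hh, rfl⟩
    · exact Subgroup.subset_closure (Or.inl ⟨g * h * g⁻¹, hH.conj_mem h hh g,
        by simp [map_pow, MulAut.conj_apply]⟩)
    · exact Subgroup.subset_closure (Or.inr ⟨g * a * g⁻¹, g * h * g⁻¹,
        hH.conj_mem h hh g, by simp [map_commutatorElement, MulAut.conj_apply]⟩)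
  exact key ⟨n, hn, rfl⟩

instance lowerP_normal (G : Type*) [Group G] (n : ℕ) : (lowerP G n).Normal := by
  induction n with
  | zero => rw [lowerP]; infer_instance
  | succ n ih => exact pStep_normal _


/-- The free group on `n` generators. -/
abbrev F (n : ℕ) := FreeGroup (Fin n)

/-- The generators. -/
def x {n : ℕ} (i : Fin n) : F n := FreeGroup.of i

/-- The relations of a power-commutator presentation: for given right-hand sides
`sq i` for the squares `x_i^2` and `c j i` (for `i < j`) for the commutators
`⁅x_j, x_i⁆` (unlisted ones being `1`). -/
def pcRels {n : ℕ} (sq : Fin n → F n) (c : Fin n → Fin n → F n) : Set (F n) :=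
  {r | (∃ i, r = x i ^ 2 * (sq i)⁻¹) ∨ ∃ i j, i < j ∧ r = ⁅x j, x i⁆ * (c j i)⁻¹}

/-- Squares: `x_1^2 = x_4`, all others trivial. -/
def sq8 : Fin 4 → F 4 := fun i =>
  match i.val with
  | 0 => x 3
  | _ => 1

/-- Commutators: `⁅x_2, x_1⁆ = x_3`, all others trivial. -/
def c8 : Fin 4 → Fin 4 → F 4 := fun j i =>
  match j.val, i.val with
  | 1, 0 => x 2
  | _, _ => 1

abbrev H8 := PresentedGroup (pcRels sq8 c8)

/-! ### Auxiliary material -/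

section PairClosure

variable {G : Type*} [Group G] {a b : G}

/-- The carrier of the subgroup generated by two commuting involutions. -/
theorem pair_carrier (ha : a * a = 1) (hb : b * b = 1) (hc : b * a = a * b) :
    (Subgroup.closure {a, b} : Set G) = {1, a, b, a * b} := by
  have ha' : ∀ z, a * (a * z) = z := fun z => by rw [← mul_assoc, ha, one_mul]
  have hb' : ∀ z, b * (b * z) = z := fun z => by rw [← mul_assoc, hb, one_mul]
  have hba : ∀ z, b * (a * z) = a * (b * z) := fun z => by
    rw [← mul_assoc, hc, mul_assoc]
  have hainv : a⁻¹ = a := inv_eq_of_mul_eq_one_right ha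
  have hbinv : b⁻¹ = b := inv_eq_of_mul_eq_one_right hb
  apply subset_antisymm
  · intro g hg
    induction hg using Subgroup.closure_induction with
    | mem y hy =>
      rcases hy with rfl | rfl
      · simp
      · simp
    | one => simp
    | mul p q hp hq ihp ihq =>
      simp only [Set.mem_insert_iff, Set.mem_singleton_iff] at ihp ihq ⊢
      rcases ihp with rfl | rfl | rfl | rfl <;> rcases ihq with rfl | rfl | rfl | rfl <;>
        simp [ha, hb, hc, ha', hb', hba, mul_assoc]
    | inv p hp ihp =>
      simp only [Set.mem_insert_iff, Set.mem_singleton_iff] at ihp ⊢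
      rcases ihp with rfl | rfl | rfl | rfl <;>
        simp [mul_inv_rev, hainv, hbinv, hc]
  · rintro g (rfl | rfl | rfl | rfl)
    · exact one_mem _
    · exact Subgroup.subset_closure (by simp)
    · exact Subgroup.subset_closure (by simp)
    · exact mul_mem (Subgroup.subset_closure (by simp))
        (Subgroup.subset_closure (by simp))

theorem pair_sq (ha : a * a = 1) (hb : b * b = 1) (hc : b * a = a * b)
    {g : G} (hg : g ∈ Subgroup.closure {a, b}) : g * g = 1 := by
  have hg' : g ∈ (Subgroup.closure {a, b} : Set G) := hg
  rw [pair_carrier ha hb hc] at hg'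
  have ha' : ∀ z, a * (a * z) = z := fun z => by rw [← mul_assoc, ha, one_mul]
  have hb' : ∀ z, b * (b * z) = z := fun z => by rw [← mul_assoc, hb, one_mul]
  have hba : ∀ z, b * (a * z) = a * (b * z) := fun z => by
    rw [← mul_assoc, hc, mul_assoc]
  rcases hg' with rfl | rfl | rfl | rfl <;>
    simp [ha, hb, ha', hb', hba, mul_assoc]

end PairClosure

/-! ### A concrete group of order 16 realizing the presentation -/

set_option maxHeartbeats 1000000 in
structure G16 where
  a : Bool
  b : Bool
  c : Bool
  d : Bool
deriving DecidableEq, Fintype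

namespace G16

instance : Mul G16 :=
  ⟨fun u v => ⟨xor u.a v.a, xor u.b v.b, xor (xor u.c v.c) (v.a && u.b),
    xor (xor u.d v.d) (u.a && v.a)⟩⟩

instance : One G16 := ⟨⟨false, false, false, false⟩⟩

instance : Inv G16 := ⟨fun u => ⟨u.a, u.b, xor u.c (u.a && u.b), xor u.d u.a⟩⟩

set_option maxHeartbeats 4000000 in
instance : Group G16 where
  mul_assoc := by decide
  one_mul := by decide
  mul_one := by decide
  inv_mul_cancel := by decide

end G16

/-- The images of the four generators in `G16`. -/
def g16 : Fin 4 → G16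
  | 0 => ⟨true, false, false, false⟩
  | 1 => ⟨false, true, false, false⟩
  | 2 => ⟨false, false, true, false⟩
  | 3 => ⟨false, false, false, true⟩

set_option maxHeartbeats 1000000 in
theorem g16_rels : ∀ r ∈ pcRels sq8 c8, FreeGroup.lift g16 r = 1 := by
  rintro r (⟨i, rfl⟩ | ⟨i, j, hij, rfl⟩)
  · fin_cases i <;>
      simp only [x, sq8, map_mul, map_pow, map_inv, FreeGroup.lift_apply_of, map_one] <;> decide
  · fin_cases i <;> fin_cases j <;>
      first
        | exact absurd hij (by decide)
        | (simp only [x, c8, commutatorElement_def, map_mul, map_inv,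
            FreeGroup.lift_apply_of, map_one] <;> decide)

/-- The evaluation homomorphism `H8 →* G16`. -/
def φ : H8 →* G16 := PresentedGroup.toGroup g16_rels

theorem φ_of (i : Fin 4) : φ (PresentedGroup.of i) = g16 i :=
  PresentedGroup.toGroup.of g16_rels

/-! ### Relations in `H8` -/

theorem mk_rel {r : F 4} (hr : r ∈ pcRels sq8 c8) :
    PresentedGroup.mk (pcRels sq8 c8) r = 1 :=
  (QuotientGroup.eq_one_iff _).2 (Subgroup.subset_normalClosure hr)

theorem mk_x (i : Fin 4) :
    PresentedGroup.mk (pcRels sq8 c8) (x i) = PresentedGroup.of i := rfl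

theorem sq_rel (i : Fin 4) :
    (PresentedGroup.of i : H8) ^ 2 = PresentedGroup.mk (pcRels sq8 c8) (sq8 i) := by
  have h := mk_rel (Or.inl ⟨i, rfl⟩)
  rw [map_mul, map_inv, map_pow, mk_x, mul_inv_eq_one] at h
  exact h

theorem comm_rel {i j : Fin 4} (hij : i < j) :
    ⁅(PresentedGroup.of j : H8), PresentedGroup.of i⁆ =
      PresentedGroup.mk (pcRels sq8 c8) (c8 j i) := by
  have h := mk_rel (Or.inr ⟨i, j, hij, rfl⟩)
  rw [map_mul, map_inv, map_commutatorElement, mk_x, mk_x, mul_inv_eq_one] at h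
  exact h

namespace H8facts

/-- Abbreviations for the generators of `H8`. -/
noncomputable def X : Fin 4 → H8 := fun i => PresentedGroup.of i

theorem r00 : X 0 * X 0 = X 3 := by
  have h := sq_rel 0
  rw [pow_two] at h
  exact h

theorem r11 : X 1 * X 1 = 1 := by
  have h := sq_rel 1
  rw [pow_two] at h
  simpa [X, show sq8 1 = 1 from rfl] using h

theorem r22 : X 2 * X 2 = 1 := by
  have h := sq_rel 2
  rw [pow_two] at h
  simpa [X, show sq8 2 = 1 from rfl] using h

theorem r33 : X 3 * X 3 = 1 := by
  have h := sq_rel 3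
  rw [pow_two] at h
  simpa [X, show sq8 3 = 1 from rfl] using h

theorem rc10 : ⁅X 1, X 0⁆ = X 2 := by
  have h := comm_rel (show (0 : Fin 4) < 1 by decide)
  exact h

theorem comm_of {i j : Fin 4} (hij : i < j) (hne : ¬(i = 0 ∧ j = 1)) :
    X j * X i = X i * X j := by
  have h := comm_rel hij
  have hc : c8 j i = 1 := by
    fin_cases i <;> fin_cases j <;> simp_all <;> rfl
  rw [hc, map_one] at h
  exact commutatorElement_eq_one_iff_mul_comm.1 h

theorem central2 : X 2 ∈ Subgroup.center H8 := by
  rw [Subgroup.mem_center_iff]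
  intro g
  have hle : Subgroup.closure (Set.range (PresentedGroup.of : Fin 4 → H8)) ≤
      Subgroup.centralizer {X 2} := by
    rw [Subgroup.closure_le]
    rintro _ ⟨i, rfl⟩
    rw [SetLike.mem_coe, Subgroup.mem_centralizer_iff]
    rintro h rfl
    fin_cases i
    · exact comm_of (by decide) (by decide)
    · exact comm_of (by decide) (by decide)
    · rfl
    · exact (comm_of (show (2:Fin 4) < 3 by decide) (by decide)).symm
  have : g ∈ Subgroup.centralizer {X 2} := by
    apply hle
    rw [PresentedGroup.closure_range_of]
    trivial
  exact (Subgroup.mem_centralizer_iff.1 this (X 2) rfl).symm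

theorem central3 : X 3 ∈ Subgroup.center H8 := by
  rw [Subgroup.mem_center_iff]
  intro g
  have hle : Subgroup.closure (Set.range (PresentedGroup.of : Fin 4 → H8)) ≤
      Subgroup.centralizer {X 3} := by
    rw [Subgroup.closure_le]
    rintro _ ⟨i, rfl⟩
    rw [SetLike.mem_coe, Subgroup.mem_centralizer_iff]
    rintro h rfl
    fin_cases i
    · exact comm_of (by decide) (by decide)
    · exact comm_of (by decide) (by decide)
    · exact comm_of (show (2:Fin 4) < 3 by decide) (by decide)
    · rfl
  have : g ∈ Subgroup.centralizer {X 3} := by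
    apply hle
    rw [PresentedGroup.closure_range_of]
    trivial
  exact (Subgroup.mem_centralizer_iff.1 this (X 3) rfl).symm

/-- The subgroup `⟨x₃, x₄⟩`. -/
noncomputable def N : Subgroup H8 := Subgroup.closure {X 2, X 3}

theorem N_le_center : N ≤ Subgroup.center H8 := by
  rw [N, Subgroup.closure_le]
  rintro g (rfl | rfl)
  · exact central2
  · exact central3

instance N_normal : N.Normal := by
  constructor
  intro n hn g
  have h := Subgroup.mem_center_iff.1 (N_le_center hn) g
  rw [h, mul_assoc, mul_inv_cancel, mul_one]
  exact hn

theorem comm23 : X 3 * X 2 = X 2 * X 3 :=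
  comm_of (show (2:Fin 4) < 3 by decide) (by decide)

theorem N_carrier : (N : Set H8) = {1, X 2, X 3, X 2 * X 3} :=
  pair_carrier r22 r33 comm23

end H8facts

namespace H8facts

theorem X2_mem_N : X 2 ∈ N := Subgroup.subset_closure (by simp)
theorem X3_mem_N : X 3 ∈ N := Subgroup.subset_closure (by simp)

/-- The quotient map `H8 → H8/N`. -/
noncomputable def mkN : H8 →* H8 ⧸ N := QuotientGroup.mk' N

theorem mkN_X2 : mkN (X 2) = 1 := (QuotientGroup.eq_one_iff _).2 X2_mem_N
theorem mkN_X3 : mkN (X 3) = 1 := (QuotientGroup.eq_one_iff _).2 X3_mem_N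

/-- Images of the first two generators in the quotient. -/
noncomputable def u : H8 ⧸ N := mkN (X 0)
noncomputable def v : H8 ⧸ N := mkN (X 1)

theorem hu : u * u = 1 := by rw [u, ← map_mul, r00]; exact mkN_X3
theorem hv : v * v = 1 := by rw [v, ← map_mul, r11, map_one]

theorem hvu : v * u = u * v := by
  apply commutatorElement_eq_one_iff_mul_comm.1
  have h : mkN ⁅X 1, X 0⁆ = 1 := by rw [rc10]; exact mkN_X2
  rwa [map_commutatorElement] at h

theorem closure_uv : Subgroup.closure {u, v} = ⊤ := by
  refine le_antisymm le_top ?_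
  intro q _
  obtain ⟨g, rfl⟩ := QuotientGroup.mk'_surjective N q
  have hg : g ∈ Subgroup.closure (Set.range (PresentedGroup.of : Fin 4 → H8)) := by
    rw [PresentedGroup.closure_range_of]; trivial
  have hmem : mkN g ∈ Subgroup.map mkN
      (Subgroup.closure (Set.range (PresentedGroup.of : Fin 4 → H8))) :=
    Subgroup.mem_map_of_mem mkN hg
  rw [MonoidHom.map_closure] at hmem
  refine (Subgroup.closure_le _).2 ?_ hmem
  rintro _ ⟨_, ⟨i, rfl⟩, rfl⟩
  fin_cases i
  · exact Subgroup.subset_closure (Set.mem_insert _ _)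
  · exact Subgroup.subset_closure (Set.mem_insert_of_mem _ rfl)
  · show mkN (X 2) ∈ (Subgroup.closure {u, v} : Set (H8 ⧸ N))
    rw [mkN_X2]
    exact one_mem _
  · show mkN (X 3) ∈ (Subgroup.closure {u, v} : Set (H8 ⧸ N))
    rw [mkN_X3]
    exact one_mem _

theorem top_carrier : (Set.univ : Set (H8 ⧸ N)) = {1, u, v, u * v} := by
  rw [← Subgroup.coe_top, ← closure_uv]
  exact pair_carrier hu hv hvu

theorem q_sq (q : H8 ⧸ N) : q * q = 1 :=
  pair_sq hu hv hvu (by rw [closure_uv]; trivial)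

theorem q_comm (p q : H8 ⧸ N) : p * q = q * p := by
  have hu' : ∀ z, u * (u * z) = z := fun z => by rw [← mul_assoc, hu, one_mul]
  have hv' : ∀ z, v * (v * z) = z := fun z => by rw [← mul_assoc, hv, one_mul]
  have hvu' : ∀ z, v * (u * z) = u * (v * z) := fun z => by
    rw [← mul_assoc, hvu, mul_assoc]
  have hp : p ∈ ({1, u, v, u * v} : Set (H8 ⧸ N)) := by rw [← top_carrier]; trivial
  have hq : q ∈ ({1, u, v, u * v} : Set (H8 ⧸ N)) := by rw [← top_carrier]; trivial
  simp only [Set.mem_insert_iff, Set.mem_singleton_iff] at hp hq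
  rcases hp with rfl | rfl | rfl | rfl <;> rcases hq with rfl | rfl | rfl | rfl <;>
    simp [hu, hv, hvu, hu', hv', hvu', mul_assoc]

theorem pstep_top : pStep (⊤ : Subgroup H8) = N := by
  apply le_antisymm
  · rw [pStep, Subgroup.closure_le]
    rintro y (⟨h, -, rfl⟩ | ⟨g, h, -, rfl⟩)
    · have hq : mkN (h ^ 2) = 1 := by rw [map_pow, pow_two]; exact q_sq _
      exact (QuotientGroup.eq_one_iff _).1 hq
    · have hq : mkN ⁅g, h⁆ = 1 := by
        rw [map_commutatorElement]
        exact commutatorElement_eq_one_iff_mul_comm.2 (q_comm _ _)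
      exact (QuotientGroup.eq_one_iff _).1 hq
  · rw [N, Subgroup.closure_le]
    rintro y (rfl | rfl)
    · rw [SetLike.mem_coe, ← rc10]
      exact Subgroup.subset_closure (Or.inr ⟨X 1, X 0, trivial, rfl⟩)
    · have hX3 : X 0 ^ 2 = X 3 := sq_rel 0
      rw [SetLike.mem_coe, ← hX3]
      exact Subgroup.subset_closure (Or.inl ⟨X 0, trivial, rfl⟩)

theorem pstep_N : pStep N = ⊥ := by
  refine le_antisymm ((Subgroup.closure_le _).2 ?_) bot_le
  rintro y (⟨h, hh, rfl⟩ | ⟨g, h, hh, rfl⟩)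
  · have hsq : h * h = 1 := pair_sq r22 r33 comm23 hh
    rw [SetLike.mem_coe, Subgroup.mem_bot, pow_two]
    exact hsq
  · have hc := Subgroup.mem_center_iff.1 (N_le_center hh) g
    rw [SetLike.mem_coe, Subgroup.mem_bot]
    exact commutatorElement_eq_one_iff_mul_comm.2 hc

theorem X2_ne_one : X 2 ≠ 1 := fun h => by
  have h' := congrArg φ h
  simp only [X, φ_of, map_one] at h'
  exact absurd h' (by decide)

theorem one_ne_X2 : (1 : H8) ≠ X 2 := fun h => X2_ne_one h.symm

theorem one_ne_X3 : (1 : H8) ≠ X 3 := fun h => by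
  have h' := congrArg φ h.symm
  simp only [X, φ_of, map_one] at h'
  exact absurd h' (by decide)

theorem one_ne_X23 : (1 : H8) ≠ X 2 * X 3 := fun h => by
  have h' := congrArg φ h.symm
  simp only [X, map_mul, φ_of, map_one] at h'
  exact absurd h' (by decide)

theorem X2_ne_X3 : X 2 ≠ X 3 := fun h => by
  have h' := congrArg φ h
  simp only [X, φ_of] at h'
  exact absurd h' (by decide)

theorem X2_ne_X23 : X 2 ≠ X 2 * X 3 := fun h => by
  have h' := congrArg φ h
  simp only [X, map_mul, φ_of] at h'
  exact absurd h' (by decide)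

theorem X3_ne_X23 : X 3 ≠ X 2 * X 3 := fun h => by
  have h' := congrArg φ h
  simp only [X, map_mul, φ_of] at h'
  exact absurd h' (by decide)

theorem card_N : Nat.card N = 4 := by
  have h0 : Nat.card N = ((N : Set H8)).ncard := Nat.card_coe_set_eq _
  rw [h0, N_carrier]
  have hfin1 : ({X 2 * X 3} : Set H8).Finite := Set.finite_singleton _
  have hfin2 : ({X 3, X 2 * X 3} : Set H8).Finite := hfin1.insert _
  have hfin3 : ({X 2, X 3, X 2 * X 3} : Set H8).Finite := hfin2.insert _
  rw [Set.ncard_insert_of_notMem (by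
      simp only [Set.mem_insert_iff, Set.mem_singleton_iff]
      push_neg
      exact ⟨one_ne_X2, one_ne_X3, one_ne_X23⟩) hfin3,
    Set.ncard_insert_of_notMem (by
      simp only [Set.mem_insert_iff, Set.mem_singleton_iff]
      push_neg
      exact ⟨X2_ne_X3, X2_ne_X23⟩) hfin2,
    Set.ncard_pair X3_ne_X23]

/-! ### The quotient is `ℤ/2 × ℤ/2` -/

/-- Images of the generators in `ℤ/2 × ℤ/2`. -/
def fM : Fin 4 → Multiplicative (ZMod 2 × ZMod 2) := fun i =>
  Multiplicative.ofAdd (match i.val with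
  | 0 => ((1 : ZMod 2), (0 : ZMod 2))
  | 1 => (0, 1)
  | _ => (0, 0))

theorem fM_rels : ∀ r ∈ pcRels sq8 c8, FreeGroup.lift fM r = 1 := by
  rintro r (⟨i, rfl⟩ | ⟨i, j, hij, rfl⟩)
  · fin_cases i <;>
      simp only [x, sq8, map_mul, map_pow, map_inv, FreeGroup.lift_apply_of, map_one] <;> decide
  · fin_cases i <;> fin_cases j <;>
      first
        | exact absurd hij (by decide)
        | (simp only [x, c8, commutatorElement_def, map_mul, map_inv,
            FreeGroup.lift_apply_of, map_one] <;> decide)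

/-- The homomorphism `H8 → ℤ/2 × ℤ/2`. -/
def ψ : H8 →* Multiplicative (ZMod 2 × ZMod 2) := PresentedGroup.toGroup fM_rels

theorem ψ_of (i : Fin 4) : ψ (PresentedGroup.of i) = fM i :=
  PresentedGroup.toGroup.of fM_rels

theorem N_le_ker : N ≤ ψ.ker := by
  rw [N, Subgroup.closure_le]
  rintro y (rfl | rfl) <;>
    · rw [SetLike.mem_coe, MonoidHom.mem_ker, X, ψ_of]
      decide

/-- The induced map on the quotient. -/
noncomputable def δ : (H8 ⧸ N) →* Multiplicative (ZMod 2 × ZMod 2) :=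
  QuotientGroup.lift N ψ N_le_ker

theorem δ_mk (g : H8) : δ (mkN g) = ψ g := rfl

theorem ψ_X (i : Fin 4) : ψ (X i) = fM i := ψ_of i

theorem δ_surj : Function.Surjective δ := by
  intro m
  rcases h : Multiplicative.toAdd m with ⟨s, t⟩
  have hm : m = Multiplicative.ofAdd (s, t) := by
    rw [← h]; rfl
  fin_cases s <;> fin_cases t
  · exact ⟨mkN 1, by rw [δ_mk, map_one, hm]; decide⟩
  · refine ⟨mkN (X 1), ?_⟩
    rw [δ_mk, ψ_X, hm]; decide
  · refine ⟨mkN (X 0), ?_⟩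
    rw [δ_mk, ψ_X, hm]; decide
  · refine ⟨mkN (X 0 * X 1), ?_⟩
    rw [δ_mk, map_mul, ψ_X, ψ_X, hm]; decide

theorem univ_finite : (Set.univ : Set (H8 ⧸ N)).Finite := by
  rw [top_carrier]
  exact (((Set.finite_singleton _).insert _).insert _).insert _

theorem finite_Q : Finite (H8 ⧸ N) := Set.finite_univ_iff.1 univ_finite

theorem card_Q_le : Nat.card (H8 ⧸ N) ≤ 4 := by
  have h0 : Nat.card (H8 ⧸ N) = (Set.univ : Set (H8 ⧸ N)).ncard :=
    (Set.ncard_univ _).symm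
  rw [h0, top_carrier]
  calc ({1, u, v, u * v} : Set (H8 ⧸ N)).ncard
      ≤ ({u, v, u * v} : Set (H8 ⧸ N)).ncard + 1 := Set.ncard_insert_le _ _
    _ ≤ (({v, u * v} : Set (H8 ⧸ N)).ncard + 1) + 1 := by
        have := Set.ncard_insert_le u ({v, u * v} : Set (H8 ⧸ N))
        omega
    _ ≤ ((({u * v} : Set (H8 ⧸ N)).ncard + 1) + 1) + 1 := by
        have := Set.ncard_insert_le v ({u * v} : Set (H8 ⧸ N))
        omega
    _ ≤ 4 := by rw [Set.ncard_singleton]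

theorem card_M : Nat.card (Multiplicative (ZMod 2 × ZMod 2)) = 4 := by
  rw [Nat.card_eq_fintype_card]
  rfl

theorem quot_iso : Nonempty ((H8 ⧸ N) ≃* Multiplicative (ZMod 2 × ZMod 2)) := by
  haveI := finite_Q
  have hge : Nat.card (Multiplicative (ZMod 2 × ZMod 2)) ≤ Nat.card (H8 ⧸ N) :=
    Nat.card_le_card_of_surjective δ δ_surj
  have hle := card_Q_le
  have hcard : Nat.card (H8 ⧸ N) = Nat.card (Multiplicative (ZMod 2 × ZMod 2)) := by
    rw [card_M] at hge ⊢
    omega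
  have hbij : Function.Bijective δ :=
    (Nat.bijective_iff_surjective_and_card δ).2 ⟨δ_surj, hcard⟩
  exact ⟨MulEquiv.ofBijective δ hbij⟩

end H8facts

open H8facts in
/-- For `H = ⟨x_1,…,x_4 ∣ x_1² = x_4, ⁅x_2,x_1⁆ = x_3, …⟩`:
`P_1(H) = ⟨x_3, x_4⟩` has order 4, `P_2(H) = 1`, `P_1(H) ≠ 1`
(so `H` has 2-class 2), and `H/P_1(H) ≅ ℤ/2 × ℤ/2`. -/
theorem stmt8 :
    lowerP H8 1 = Subgroup.closure {PresentedGroup.of (2 : Fin 4), PresentedGroup.of 3} ∧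
    Nat.card (lowerP H8 1) = 4 ∧
    lowerP H8 2 = ⊥ ∧
    lowerP H8 1 ≠ ⊥ ∧
    Nonempty ((H8 ⧸ lowerP H8 1) ≃* Multiplicative (ZMod 2 × ZMod 2)) := by
  have h1 : lowerP H8 1 = N := by
    show pStep (lowerP H8 0) = N
    rw [show lowerP H8 0 = ⊤ from rfl]
    exact pstep_top
  refine ⟨by rw [h1]; rfl, by rw [h1]; exact card_N, ?_, ?_, ?_⟩
  · show pStep (lowerP H8 1) = ⊥
    rw [h1]
    exact pstep_N
  · rw [h1]
    intro hbot
    exact X2_ne_one (Subgroup.mem_bot.1 (hbot ▸ X2_mem_N))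
  · obtain ⟨e⟩ := quot_iso
    exact ⟨(QuotientGroup.quotientMulEquivOfEq h1).trans e⟩
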